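/- Let A ∈ ℝ^{n×n}, B = e_{i₀} ∈ ℝⁿ, σ_w² ≥ 0, and let μ be a sensor placement with nonempty support such that (A, C(μ)) is detectable and (A, Bσ_w) is stabilizable. Suppose every sensor node j ∈ supp(μ) satisfies distance l_{i₀ j} ≥ ζ in G(A) with equality for at least one j, and (A^{l_{i₀ j}})_{j i₀} ≠ 0 for all j reachable from i₀. Then the matrix Σ = σ_w² Σ_{m=0}^{ζ} A^m B Bᵀ (Aᵀ)^m satisfies the discrete algebraic Riccati equation Σ = AΣAᵀ + σ_w² BBᵀ − AΣC(μ)ᵀ (C(μ)ΣC(μ)ᵀ)† C(μ)ΣAᵀ, where (·)† is the Moore–Penrose pseudo-inverse. -/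

import Mathlib

/-!
Write `b_m = A^m e_{i₀}`, so that `Σ = σ² ∑_{m ≤ ζ} b_m b_mᵀ`. A nonzero entry `(A^m)_{j i₀}`
yields a walk of length `m` from `i₀` to `j`, so `C b_m = 0` for every `m < ζ`. Hence every
product `X Σ Yᵀ` in which `X` or `Y` is `C` only sees the last term, `C Σ Cᵀ = σ² u uᵀ` with
`u = C b_ζ ≠ 0`, and the correction term of the Riccati equation is a scalar multiple of
`b_{ζ+1} b_{ζ+1}ᵀ`; the Penrose identity `M P M = M` fixes that scalar to `σ²`. On the other
hand `A Σ Aᵀ + σ² BBᵀ` telescopes to `Σ + σ² b_{ζ+1} b_{ζ+1}ᵀ`.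
-/

open Matrix BigOperators

/-- The four Penrose conditions characterizing the Moore–Penrose pseudo-inverse. -/
def IsMoorePenrose {α β : Type*} [Fintype α] [Fintype β]
    (M : Matrix α β ℝ) (P : Matrix β α ℝ) : Prop :=
  M * P * M = M ∧ P * M * P = P ∧ (M * P)ᵀ = M * P ∧ (P * M)ᵀ = P * M
/-- There is a directed walk of length `m` from `i` to `j` in the graph `G(A)`,
where there is an edge from `u` to `v` iff `A v u ≠ 0`. -/
def hasWalk {n : ℕ} (A : Matrix (Fin n) (Fin n) ℝ) (i j : Fin n) (m : ℕ) : Prop :=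
  ∃ c : Fin (m + 1) → Fin n, c 0 = i ∧ c (Fin.last m) = j ∧
    ∀ k : Fin m, A (c k.succ) (c k.castSucc) ≠ 0

/-- `m` is the distance from `i` to `j` in the directed graph `G(A)`. -/
def IsGraphDist {n : ℕ} (A : Matrix (Fin n) (Fin n) ℝ) (i j : Fin n) (m : ℕ) : Prop :=
  hasWalk A i j m ∧ ∀ m' < m, ¬ hasWalk A i j m'
/-- The `i`-th standard basis vector of `ℝⁿ`, as a column matrix. -/
def eCol {n : ℕ} (i : Fin n) : Matrix (Fin n) (Fin 1) ℝ :=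
  Matrix.of fun r _ => if r = i then (1 : ℝ) else 0

/-- The measurement matrix `C(μ)` whose rows are `e_jᵀ` for `j` in the support `supp`. -/
def Cmat {n : ℕ} (supp : Finset (Fin n)) : Matrix {j // j ∈ supp} (Fin n) ℝ :=
  Matrix.of fun j k => if (j : Fin n) = k then (1 : ℝ) else 0

/-- PBH-type detectability of the pair `(A, C)`. -/
def Detectable {n : ℕ} {α : Type*} [Fintype α]
    (A : Matrix (Fin n) (Fin n) ℝ) (C : Matrix α (Fin n) ℝ) : Prop :=
  ∀ (μ : ℂ) (v : Fin n → ℂ), 1 ≤ ‖μ‖ →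
    (A.map (Complex.ofReal ·)).mulVec v = μ • v →
    (C.map (Complex.ofReal ·)).mulVec v = 0 → v = 0

/-- PBH-type stabilizability of the pair `(A, B)`. -/
def Stabilizable {n : ℕ} {α : Type*} [Fintype α]
    (A : Matrix (Fin n) (Fin n) ℝ) (B : Matrix (Fin n) α ℝ) : Prop :=
  ∀ (μ : ℂ) (v : Fin n → ℂ), 1 ≤ ‖μ‖ →
    Matrix.vecMul v (A.map (Complex.ofReal ·)) = μ • v →
    Matrix.vecMul v (B.map (Complex.ofReal ·)) = 0 → v = 0

open Finset

lemma hasWalk_of_pow_apply_ne_zero {n : ℕ} (A : Matrix (Fin n) (Fin n) ℝ) {i j : Fin n}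
    {m : ℕ} (h : (A ^ m) j i ≠ 0) : hasWalk A i j m := by
  induction m generalizing j with
  | zero =>
    obtain rfl : j = i := by
      by_contra hne
      simp [one_apply, hne] at h
    exact ⟨fun _ => j, rfl, rfl, fun k => k.elim0⟩
  | succ m ih =>
    rw [pow_succ', mul_apply] at h
    obtain ⟨k, -, hk⟩ := exists_ne_zero_of_sum_ne_zero h
    obtain ⟨c, hc0, hcl, hce⟩ := ih (right_ne_zero_of_mul hk)
    refine ⟨Fin.snoc c j, by simpa using hc0, by simp, Fin.lastCases ?_ fun s => ?_⟩
    · simpa [hcl] using left_ne_zero_of_mul hk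
    · rw [Fin.succ_castSucc, Fin.snoc_castSucc, Fin.snoc_castSucc]
      exact hce s

lemma IsGraphDist.pow_apply_eq_zero_of_lt {n : ℕ} {A : Matrix (Fin n) (Fin n) ℝ}
    {i j : Fin n} {d m : ℕ} (hd : IsGraphDist A i j d) (hm : m < d) : (A ^ m) j i = 0 :=
  not_not.mp fun h => hd.2 m hm (hasWalk_of_pow_apply_ne_zero A h)

lemma Cmat_mul_apply {n : ℕ} (supp : Finset (Fin n)) {α : Type*} [Fintype α]
    (X : Matrix (Fin n) α ℝ) (j : {j // j ∈ supp}) (k : α) :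
    (Cmat supp * X) j k = X j k := by
  simp [Cmat, mul_apply]

lemma mul_eCol_apply {n : ℕ} (i : Fin n) {α : Type*} [Fintype α]
    (X : Matrix α (Fin n) ℝ) (r : α) (c : Fin 1) : (X * eCol i) r c = X r i := by
  simp [eCol, mul_apply]

def ctrbGramian {R ι κ : Type*} [CommRing R] [Fintype ι] [DecidableEq ι] [Fintype κ]
    (A : Matrix ι ι R) (B : Matrix ι κ R) (k : ℕ) : Matrix ι ι R :=
  ∑ m ∈ range k, A ^ m * B * Bᵀ * Aᵀ ^ m

section Gramian

variable {R ι κ : Type*} [CommRing R] [Fintype ι] [DecidableEq ι] [Fintype κ]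
  (A : Matrix ι ι R) (B : Matrix ι κ R)

lemma ctrbGramian_eq_sum (k : ℕ) :
    ctrbGramian A B k = ∑ m ∈ range k, A ^ m * B * (A ^ m * B)ᵀ := by
  refine sum_congr rfl fun m _ => ?_
  rw [transpose_mul, transpose_pow, ← Matrix.mul_assoc]

lemma mul_ctrbGramian_mul_transpose_add (k : ℕ) :
    A * ctrbGramian A B k * Aᵀ + B * Bᵀ
      = ctrbGramian A B k + A ^ k * B * (A ^ k * B)ᵀ := by
  simp only [ctrbGramian_eq_sum, Matrix.mul_sum, Matrix.sum_mul]
  rw [← sum_range_succ, sum_range_succ']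
  congr 1
  · refine sum_congr rfl fun m _ => ?_
    rw [pow_succ', transpose_mul, transpose_mul, transpose_mul]
    simp only [Matrix.mul_assoc]
  · simp

lemma mul_ctrbGramian_mul_transpose_of_mul_eq_zero {α β : Type*} [Fintype α] [Fintype β]
    (X : Matrix α ι R) (Y : Matrix β ι R) (k : ℕ)
    (h : ∀ m < k, X * (A ^ m * B) = 0 ∨ Y * (A ^ m * B) = 0) :
    X * ctrbGramian A B (k + 1) * Yᵀ = X * (A ^ k * B) * (Y * (A ^ k * B))ᵀ := by
  have hterm : ∀ m, X * (A ^ m * B * (A ^ m * B)ᵀ) * Yᵀ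
      = X * (A ^ m * B) * (Y * (A ^ m * B))ᵀ := fun m => by
    simp only [transpose_mul, Matrix.mul_assoc]
  rw [ctrbGramian_eq_sum, Matrix.mul_sum, Matrix.sum_mul, sum_range_succ, hterm,
    sum_eq_zero, zero_add]
  intro m hm
  rcases h m (mem_range.mp hm) with h | h <;> rw [hterm, h] <;> simp

end Gramian

section RankOne

variable {K : Type*} [Field K]

lemma mul_transpose_mul_mul_mul_transpose {α β γ : Type*} [Fintype β]
    (x : Matrix α (Fin 1) K) (u : Matrix β (Fin 1) K) (y : Matrix γ (Fin 1) K)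
    (Q : Matrix β β K) : x * uᵀ * Q * (u * yᵀ) = (uᵀ * Q * u) 0 0 • (x * yᵀ) := by
  have hscalar : uᵀ * Q * u = (uᵀ * Q * u) 0 0 • (1 : Matrix (Fin 1) (Fin 1) K) := by
    ext a b
    simp [Subsingleton.elim a 0, Subsingleton.elim b 0]
  calc x * uᵀ * Q * (u * yᵀ) = x * (uᵀ * Q * u) * yᵀ := by simp only [Matrix.mul_assoc]
    _ = x * ((uᵀ * Q * u) 0 0 • (1 : Matrix (Fin 1) (Fin 1) K)) * yᵀ := by rw [← hscalar]
    _ = _ := by rw [Matrix.mul_smul, Matrix.smul_mul, Matrix.mul_one]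

lemma mul_transpose_self_ne_zero {α : Type*} {u : Matrix α (Fin 1) K} (hu : u ≠ 0) :
    u * uᵀ ≠ 0 := by
  obtain ⟨j, c, hj⟩ : ∃ j c, u j c ≠ 0 := by
    by_contra! h
    exact hu (Matrix.ext h)
  intro h
  exact hj (by simpa [mul_apply, Subsingleton.elim c 0] using congrFun (congrFun h j) j)

lemma riccati_of_rankOne {ι α : Type*} [Fintype ι] [Fintype α]
    (A G Q : Matrix ι ι K) (C : Matrix α ι K) (P : Matrix α α K) (s : K)
    (u : Matrix α (Fin 1) K) (v : Matrix ι (Fin 1) K) (hu : u ≠ 0)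
    (hCGC : C * G * Cᵀ = u * uᵀ) (hAGC : A * G * Cᵀ = v * uᵀ) (hCGA : C * G * Aᵀ = u * vᵀ)
    (hAGA : A * G * Aᵀ + Q = G + v * vᵀ)
    (hP : C * (s • G) * Cᵀ * P * (C * (s • G) * Cᵀ) = C * (s • G) * Cᵀ) :
    s • G = A * (s • G) * Aᵀ + s • Q - A * (s • G) * Cᵀ * P * C * (s • G) * Aᵀ := by
  simp only [Matrix.mul_smul, Matrix.smul_mul, hCGC] at hP
  rw [mul_transpose_mul_mul_mul_transpose, smul_smul, smul_smul] at hP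
  -- `M P M = M` for `M = s • u uᵀ` pins down the scalar that the correction term carries.
  have hscalar : s * s * (uᵀ * P * u) 0 0 = s :=
    smul_left_injective K (mul_transpose_self_ne_zero hu) hP
  have hcorr : A * (s • G) * Cᵀ * P * C * (s • G) * Aᵀ = s • (v * vᵀ) := by
    calc A * (s • G) * Cᵀ * P * C * (s • G) * Aᵀ
        = (s * s) • (A * G * Cᵀ * P * (C * G * Aᵀ)) := by
          simp only [Matrix.mul_smul, Matrix.smul_mul, smul_smul, Matrix.mul_assoc]
      _ = s • (v * vᵀ) := by
          rw [hAGC, hCGA, mul_transpose_mul_mul_mul_transpose, smul_smul, hscalar]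
  rw [hcorr, Matrix.mul_smul, Matrix.smul_mul, ← smul_add, hAGA, smul_add,
    add_sub_cancel_right]

end RankOne

lemma Cmat_mul_pow_mul_eCol_eq_zero {n : ℕ} {A : Matrix (Fin n) (Fin n) ℝ} {i₀ : Fin n}
    {supp : Finset (Fin n)} {d : Fin n → ℕ} (hd : ∀ j, IsGraphDist A i₀ j (d j)) {m : ℕ}
    (hm : ∀ j ∈ supp, m < d j) : Cmat supp * (A ^ m * eCol i₀) = 0 := by
  ext j c
  rw [← Matrix.mul_assoc, mul_eCol_apply, Cmat_mul_apply]
  exact (hd j).pow_apply_eq_zero_of_lt (hm j j.2)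

lemma Cmat_mul_pow_mul_eCol_ne_zero {n : ℕ} {A : Matrix (Fin n) (Fin n) ℝ} {i₀ j : Fin n}
    {supp : Finset (Fin n)} (hj : j ∈ supp) {m : ℕ} (hm : (A ^ m) j i₀ ≠ 0) :
    Cmat supp * (A ^ m * eCol i₀) ≠ 0 := fun h => by
  have := congrFun (congrFun h ⟨j, hj⟩) 0
  rw [← Matrix.mul_assoc, mul_eCol_apply, Cmat_mul_apply] at this
  exact hm this

theorem stmt3_general {n : ℕ} (A : Matrix (Fin n) (Fin n) ℝ) (i₀ : Fin n) (σw : ℝ)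
    (supp : Finset (Fin n))
    (d : Fin n → ℕ) (hd : ∀ j, IsGraphDist A i₀ j (d j))
    (hdnz : ∀ j, (A ^ d j) j i₀ ≠ 0)
    (ζ : ℕ) (hζle : ∀ j ∈ supp, ζ ≤ d j) (hζeq : ∃ j ∈ supp, d j = ζ)
    (S : Matrix (Fin n) (Fin n) ℝ)
    (hS : S = σw ^ 2 • ∑ m ∈ Finset.range (ζ + 1),
        A ^ m * eCol i₀ * (eCol i₀)ᵀ * Aᵀ ^ m)
    (P : Matrix {j // j ∈ supp} {j // j ∈ supp} ℝ)
    (hP : IsMoorePenrose (Cmat supp * S * (Cmat supp)ᵀ) P) :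
    S = A * S * Aᵀ + σw ^ 2 • (eCol i₀ * (eCol i₀)ᵀ)
      - A * S * (Cmat supp)ᵀ * P * Cmat supp * S * Aᵀ := by
  set C := Cmat supp
  set b := A ^ ζ * eCol i₀
  have hCb : ∀ m < ζ, C * (A ^ m * eCol i₀) = 0 := fun m hm =>
    Cmat_mul_pow_mul_eCol_eq_zero hd fun j hj => hm.trans_le (hζle j hj)
  have hAb : A * b = A ^ (ζ + 1) * eCol i₀ := by rw [← Matrix.mul_assoc, ← pow_succ']
  obtain ⟨j, hj, rfl⟩ := hζeq
  change S = σw ^ 2 • ctrbGramian A (eCol i₀) (d j + 1) at hS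
  subst hS
  refine riccati_of_rankOne _ _ _ C P _ (C * b) (A * b)
    (Cmat_mul_pow_mul_eCol_ne_zero hj (hdnz j)) ?_ ?_ ?_ ?_ hP.1
  · exact mul_ctrbGramian_mul_transpose_of_mul_eq_zero _ _ _ _ _ fun m hm => .inl (hCb m hm)
  · exact mul_ctrbGramian_mul_transpose_of_mul_eq_zero _ _ _ _ _ fun m hm => .inr (hCb m hm)
  · exact mul_ctrbGramian_mul_transpose_of_mul_eq_zero _ _ _ _ _ fun m hm => .inl (hCb m hm)
  · rw [hAb]
    exact mul_ctrbGramian_mul_transpose_add _ _ _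

/-- The matrix `Σ = σ_w² Σ_{m=0}^{ζ} A^m B Bᵀ (Aᵀ)^m` (with `B = e_{i₀}`) satisfies the
discrete algebraic Riccati equation with zero measurement noise (pseudo-inverse version). -/
theorem stmt3 {n : ℕ} (A : Matrix (Fin n) (Fin n) ℝ) (i₀ : Fin n) (σw : ℝ) (hσw : 0 ≤ σw)
    (supp : Finset (Fin n)) (hsupp : supp.Nonempty)
    (hdet : Detectable A (Cmat supp))
    (hstab : Stabilizable A (σw • eCol i₀))
    (d : Fin n → ℕ) (hd : ∀ j, IsGraphDist A i₀ j (d j))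
    (hdnz : ∀ j, (A ^ d j) j i₀ ≠ 0)
    (ζ : ℕ) (hζle : ∀ j ∈ supp, ζ ≤ d j) (hζeq : ∃ j ∈ supp, d j = ζ)
    (S : Matrix (Fin n) (Fin n) ℝ)
    (hS : S = σw ^ 2 • ∑ m ∈ Finset.range (ζ + 1),
        A ^ m * eCol i₀ * (eCol i₀)ᵀ * Aᵀ ^ m)
    (P : Matrix {j // j ∈ supp} {j // j ∈ supp} ℝ)
    (hP : IsMoorePenrose (Cmat supp * S * (Cmat supp)ᵀ) P) :
    S = A * S * Aᵀ + σw ^ 2 • (eCol i₀ * (eCol i₀)ᵀ)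
      - A * S * (Cmat supp)ᵀ * P * Cmat supp * S * Aᵀ :=
  stmt3_general A i₀ σw supp d hd hdnz ζ hζle hζeq S hS P hP
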